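/- The set of homotopy classes of continuous maps from the torus T² = S¹ × S¹ to the circle S¹ is in bijection with ℤ × ℤ. -/

import Mathlib

open CategoryTheory

/-- The `n`-sphere: the unit sphere in `EuclideanSpace ℝ (Fin (n+1))`, with the
subspace topology. -/
abbrev Sph (n : ℕ) : Type := Metric.sphere (0 : EuclideanSpace ℝ (Fin (n+1))) 1

/-- A fixed basepoint `pₙ` on the `n`-sphere. -/
noncomputable def pt (n : ℕ) : Sph n :=
  ⟨EuclideanSpace.single 0 1, by simp [EuclideanSpace.norm_single]⟩

/-- `π₀ C(X, Y)`: homotopy classes of continuous maps `X → Y`, i.e. the quotient of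
`C(X, Y)` by the homotopy relation. -/
def HtpyClasses (X Y : Type*) [TopologicalSpace X] [TopologicalSpace Y] : Type _ :=
  Quotient (⟨ContinuousMap.Homotopic, ContinuousMap.Homotopic.equivalence⟩ : Setoid C(X, Y))

/-- The torus `T² = S¹ × S¹`. -/
abbrev Torus : Type := Sph 1 × Sph 1

/-!
Replace `S¹` by `ℝ/ℤ`. Two maps `f g : X → ℝ/ℤ` are homotopic exactly when `f - g` lifts to `ℝ`:
a lift gives a straight-line homotopy, and conversely, for a homotopy `H` from `g` to `f`, homotopy
lifting for `ℝ → ℝ/ℤ` lifts `t ↦ H t - g`, which starts at `0`. On the torus, a character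
`(x, y) ↦ m x + n y` lifts only when it is trivial (a lift would be `ℤ²`-periodic, `m u₁ + n u₂` is
not), so distinct characters are not homotopic. Every `f : T² → ℝ/ℤ` is homotopic to a character:
lift `f ∘ (ℝ² → T²)` to `F : ℝ² → ℝ`; the increments of `F` along `(1, 0)` and `(0, 1)` are
constant integers `m` and `n`, so `F u - m u₁ - n u₂` is `ℤ²`-periodic and descends to a lift of
`f - torusCharacter m n`.
-/

open ContinuousMap unitInterval Topology

namespace AddCircle

variable {p : ℝ} {X : Type*} [TopologicalSpace X]

theorem exists_eq_add_zsmul_of_coe_eq [PreconnectedSpace X] {a b : X → ℝ}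
    (ha : Continuous a) (hb : Continuous b) (h : ∀ x, (a x : AddCircle p) = b x) :
    ∃ n : ℤ, ∀ x, a x = b x + n • p := by
  rcases isEmpty_or_nonempty X with _ | ⟨⟨x₀⟩⟩
  · exact ⟨0, isEmptyElim⟩
  obtain ⟨n, hn⟩ :=
    AddSubgroup.mem_zmultiples_iff.mp (QuotientAddGroup.eq_iff_sub_mem.mp (h x₀))
  refine ⟨n, congrFun ((isCoveringMap_coe p).eq_of_comp_eq ha (hb.add continuous_const) ?_ x₀ ?_)⟩
  · funext x
    simp [h x]
  · rw [hn]; abel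

theorem homotopic_iff_exists_sub_eq_coe {f g : C(X, AddCircle p)} :
    f.Homotopic g ↔ ∃ h : C(X, ℝ), ∀ x, f x - g x = h x := by
  constructor
  · rintro ⟨H⟩
    let K : C(I × X, AddCircle p) := ⟨fun tx => H.symm tx - g tx.2, by fun_prop⟩
    have hK : ∀ x, K (0, x) = ((0 : C(X, ℝ)) x : AddCircle p) := by simp [K]
    refine ⟨((isCoveringMap_coe p).liftHomotopy K 0 hK).curry 1, fun x => ?_⟩
    have := congrFun ((isCoveringMap_coe p).liftHomotopy_lifts K 0 hK) (1, x)
    simp [K] at this ⊢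
    exact this.symm
  · rintro ⟨h, hh⟩
    exact ⟨{ toFun := fun tx => g tx.2 + (((1 - (tx.1 : ℝ)) * h tx.2 : ℝ) : AddCircle p)
             continuous_toFun := by fun_prop
             map_zero_left := fun x => by simp [← hh]
             map_one_left := fun x => by simp }⟩

end AddCircle

theorem Homeomorph.homotopic_arrowCongr_iff {X X' Y Y' : Type*} [TopologicalSpace X]
    [TopologicalSpace X'] [TopologicalSpace Y] [TopologicalSpace Y'] (eX : X ≃ₜ X') (eY : Y ≃ₜ Y')
    {f g : C(X, Y)} : (eX.arrowCongr eY f).Homotopic (eX.arrowCongr eY g) ↔ f.Homotopic g := by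
  refine ⟨fun h => ?_, fun h => (Homotopic.refl _).comp (h.comp (Homotopic.refl _))⟩
  convert (Homotopic.refl (eY.symm : C(Y', Y))).comp (h.comp (Homotopic.refl (eX : C(X, X')))) <;>
    ext <;> simp [Homeomorph.arrowCongr]

def HtpyClasses.congr {X X' Y Y' : Type*} [TopologicalSpace X] [TopologicalSpace X']
    [TopologicalSpace Y] [TopologicalSpace Y'] (eX : X ≃ₜ X') (eY : Y ≃ₜ Y') :
    HtpyClasses X Y ≃ HtpyClasses X' Y' :=
  Quotient.congr (eX.arrowCongr eY).toEquiv fun _ _ => (eX.homotopic_arrowCongr_iff eY).symm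

noncomputable def sphereOneHomeomorphCircle : Sph 1 ≃ₜ Circle :=
  Complex.orthonormalBasisOneI.repr.symm.toHomeomorph.subtype fun x => by
    simp only [Submonoid.unitSphere, Submonoid.mem_mk, Subsemigroup.mem_mk,
      mem_sphere_zero_iff_norm, LinearIsometryEquiv.coe_toHomeomorph, LinearIsometryEquiv.norm_map]

noncomputable def sphereOneHomeomorphUnitAddCircle : Sph 1 ≃ₜ UnitAddCircle :=
  sphereOneHomeomorphCircle.trans (AddCircle.homeomorphCircle one_ne_zero).symm

def torusCover : C(ℝ × ℝ, UnitAddCircle × UnitAddCircle) :=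
  ⟨Prod.map (↑) (↑), by fun_prop⟩

theorem isQuotientMap_torusCover : IsQuotientMap torusCover :=
  (QuotientAddGroup.isOpenQuotientMap_mk.prodMap
    QuotientAddGroup.isOpenQuotientMap_mk).isQuotientMap

theorem torusCover_add_intCast (u : ℝ × ℝ) (a b : ℤ) :
    torusCover (u + ((a : ℝ), (b : ℝ))) = torusCover u := by
  have hcoe (x : ℝ) (k : ℤ) : ((x + k : ℝ) : UnitAddCircle) = x := by
    rw [AddCircle.coe_add, ← zsmul_one, AddCircle.coe_zsmul, AddCircle.coe_period, smul_zero,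
      add_zero]
  exact Prod.ext (hcoe u.1 a) (hcoe u.2 b)

def torusCharacter (m n : ℤ) : C(UnitAddCircle × UnitAddCircle, UnitAddCircle) :=
  ⟨fun z => m • z.1 + n • z.2, by fun_prop⟩

theorem torusCharacter_sub_torusCharacter (m n m' n' : ℤ) (z : UnitAddCircle × UnitAddCircle) :
    torusCharacter m n z - torusCharacter m' n' z = torusCharacter (m - m') (n - n') z := by
  simp only [torusCharacter, ContinuousMap.coe_mk, sub_zsmul]
  abel

theorem torusCharacter_torusCover (m n : ℤ) (u : ℝ × ℝ) :
    torusCharacter m n (torusCover u) = ((m * u.1 + n * u.2 : ℝ) : UnitAddCircle) := by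
  simp [torusCharacter, torusCover, ← zsmul_eq_mul]

theorem eq_zero_of_torusCharacter_eq_coe {m n : ℤ} {h : C(UnitAddCircle × UnitAddCircle, ℝ)}
    (hh : ∀ z, torusCharacter m n z = h z) : m = 0 ∧ n = 0 := by
  obtain ⟨k, hk⟩ := AddCircle.exists_eq_add_zsmul_of_coe_eq (h.comp torusCover).continuous
    (by fun_prop : Continuous fun u : ℝ × ℝ => m * u.1 + n * u.2)
    (fun u => by rw [← torusCharacter_torusCover, hh]; rfl)
  have h₁ : torusCover (1, 0) = torusCover (0, 0) := by simp [torusCover, AddCircle.coe_period]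
  have h₂ : torusCover (0, 1) = torusCover (0, 0) := by simp [torusCover, AddCircle.coe_period]
  have e₀ := hk (0, 0)
  have e₁ := hk (1, 0)
  have e₂ := hk (0, 1)
  rw [ContinuousMap.comp_apply] at e₀ e₁ e₂
  rw [h₁] at e₁
  rw [h₂] at e₂
  have hm : (m : ℝ) = 0 := by linarith
  have hn : (n : ℝ) = 0 := by linarith
  exact ⟨mod_cast hm, mod_cast hn⟩

theorem exists_comp_torusCover_eq_of_periodic {G : C(ℝ × ℝ, ℝ)}
    (h₁ : Function.Periodic G (1, 0)) (h₂ : Function.Periodic G (0, 1)) :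
    ∃ g : C(UnitAddCircle × UnitAddCircle, ℝ), g.comp torusCover = G := by
  refine ⟨isQuotientMap_torusCover.lift G fun u v huv => ?_, isQuotientMap_torusCover.lift_comp _ _⟩
  obtain ⟨hu₁, hu₂⟩ := Prod.ext_iff.mp huv
  obtain ⟨a, ha⟩ := AddSubgroup.mem_zmultiples_iff.mp (QuotientAddGroup.eq_iff_sub_mem.mp hu₁)
  obtain ⟨b, hb⟩ := AddSubgroup.mem_zmultiples_iff.mp (QuotientAddGroup.eq_iff_sub_mem.mp hu₂)
  have : u = v + a • (1, 0) + b • (0, 1) := by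
    ext <;> simp at ha hb ⊢ <;> linarith
  rw [this, h₂.zsmul b, h₁.zsmul a]

theorem exists_sub_torusCharacter_eq_coe (f : C(UnitAddCircle × UnitAddCircle, UnitAddCircle)) :
    ∃ m n : ℤ, ∃ h : C(UnitAddCircle × UnitAddCircle, ℝ),
      ∀ z, f z - torusCharacter m n z = h z := by
  obtain ⟨e₀, he₀⟩ := QuotientAddGroup.mk_surjective (f (torusCover 0))
  obtain ⟨G, -, hG⟩ := ((AddCircle.isCoveringMap_coe 1).existsUnique_continuousMap_lifts
    (f.comp torusCover) 0 e₀ he₀).exists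
  have hlift : ∀ u, (G u : UnitAddCircle) = f (torusCover u) := congrFun hG
  have hperiod : ∀ a b : ℤ, ∃ k : ℤ, ∀ u, G (u + ((a : ℝ), (b : ℝ))) = G u + k • 1 :=
    fun a b => AddCircle.exists_eq_add_zsmul_of_coe_eq (by fun_prop) G.continuous
      fun u => by rw [hlift, hlift, torusCover_add_intCast]
  obtain ⟨m, hm⟩ := hperiod 1 0
  obtain ⟨n, hn⟩ := hperiod 0 1
  simp only [Int.cast_one, Int.cast_zero, zsmul_one] at hm hn
  let Λ : C(ℝ × ℝ, ℝ) := ⟨fun u => m * u.1 + n * u.2, by fun_prop⟩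
  obtain ⟨g, hg⟩ := exists_comp_torusCover_eq_of_periodic (G := G - Λ)
    (fun u => by simp [Λ, hm]; ring) (fun u => by simp [Λ, hn]; ring)
  refine ⟨m, n, g, fun z => ?_⟩
  obtain ⟨u, rfl⟩ := isQuotientMap_torusCover.surjective z
  rw [← ContinuousMap.comp_apply g, hg, torusCharacter_torusCover, ← hlift]
  simp [Λ]

theorem eq_of_torusCharacter_homotopic {m n m' n' : ℤ}
    (h : (torusCharacter m n).Homotopic (torusCharacter m' n')) : m = m' ∧ n = n' := by
  obtain ⟨g, hg⟩ := AddCircle.homotopic_iff_exists_sub_eq_coe.mp h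
  obtain ⟨hm, hn⟩ := eq_zero_of_torusCharacter_eq_coe fun z =>
    (torusCharacter_sub_torusCharacter m n m' n' z).symm.trans (hg z)
  omega

noncomputable def homotopyClassesTorusEquiv :
    HtpyClasses (UnitAddCircle × UnitAddCircle) UnitAddCircle ≃ ℤ × ℤ :=
  .symm <| .ofBijective (fun k => Quotient.mk _ (torusCharacter k.1 k.2))
    ⟨fun _ _ h => Prod.ext_iff.mpr (eq_of_torusCharacter_homotopic (Quotient.exact h)),
     Quotient.ind fun f => by
      obtain ⟨m, n, h, hh⟩ := exists_sub_torusCharacter_eq_coe f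
      exact ⟨(m, n), Quotient.sound (AddCircle.homotopic_iff_exists_sub_eq_coe.mpr ⟨h, hh⟩).symm⟩⟩

/-- The set of homotopy classes of continuous maps from the torus
`T² = S¹ × S¹` to the circle `S¹` is in bijection with `ℤ × ℤ`. -/
theorem homotopy_classes_torus_to_circle_equiv_int_prod_int :
    Nonempty (HtpyClasses Torus (Sph 1) ≃ ℤ × ℤ) :=
  let e := sphereOneHomeomorphUnitAddCircle
  ⟨(HtpyClasses.congr (e.prodCongr e) e).trans homotopyClassesTorusEquiv⟩
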